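/- arXiv:1709.00651 — 2 statements merged into one kernel-verified Lean document; each statement's English description precedes it below -/
import Mathlib

section
/- For every positive integer n, the set X_n consisting of the points (cos(2iπ/n), cos((2j−1)π/(n+1))) for 0 ≤ i ≤ ⌊n/2⌋, 1 ≤ j ≤ ⌊n/2⌋+1, together with the points (cos((2i−1)π/n), cos((2j−2)π/(n+1))) for 1 ≤ i ≤ ⌊n/2⌋+1, 1 ≤ j ≤ ⌊n/2⌋+2, has cardinality (n+1)(n+2)/2 = dim Π_n^2. -/
open Real

/-- The set of Padua points. -/
def paduaPoints (n : ℕ) : Set (ℝ × ℝ) :=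
  {p | ∃ i j : ℕ, i ≤ n / 2 ∧ 1 ≤ j ∧ j ≤ n / 2 + 1 ∧
        p = (cos (2 * i * π / n), cos ((2 * j - 1) * π / (n + 1)))} ∪
  {p | ∃ i j : ℕ, 1 ≤ i ∧ i ≤ n / 2 + 1 ∧ 1 ≤ j ∧ j ≤ n / 2 + 2 ∧
        p = (cos ((2 * i - 1) * π / n), cos ((2 * j - 2) * π / (n + 1)))}

/-! Both coordinates of a Padua point are Chebyshev–Lobatto nodes `cos (kπ/d)` (with `d = n`
and `d = n + 1` respectively), and `k ↦ cos (kπ/d)` is injective on `0 ≤ k ≤ d`. The Padua points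
are exactly the pairs of such nodes whose indices have opposite parity; the index `k = d + 1`, which
the definition allows when `n` is even, only repeats the node `k = d - 1`, because
`cos ((d + 1)π/d) = cos ((d - 1)π/d)`. Counting even and odd indices gives
`(⌊n/2⌋ + 1)⌈(n+1)/2⌉ + ⌈n/2⌉(⌊(n+1)/2⌋ + 1) = (n + 1)(n + 2)/2`. -/

open Finset

lemma injOn_cos_nat_mul_pi_div {d : ℕ} (hd : 0 < d) :
    Set.InjOn (fun k : ℕ => cos (k * π / d)) (Set.Iic d) := by
  have hd' : (0 : ℝ) < d := by exact_mod_cast hd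
  have mem_Icc {k : ℕ} (hk : k ≤ d) : (k : ℝ) * π / d ∈ Set.Icc 0 π := by
    refine ⟨by positivity, (div_le_iff₀ hd').2 ?_⟩
    rw [mul_comm π]
    gcongr
  intro k hk l hl h
  have := injOn_cos (mem_Icc hk) (mem_Icc hl) h
  rw [div_left_inj' hd'.ne', mul_left_inj' pi_ne_zero] at this
  exact_mod_cast this

lemma cos_add_one_mul_pi_div {d : ℝ} (hd : d ≠ 0) :
    cos ((d + 1) * π / d) = cos ((d - 1) * π / d) := by
  rw [show (d + 1) * π / d = π / d + π by field_simp; ring,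
    show (d - 1) * π / d = π - π / d by field_simp, cos_add_pi, cos_pi_sub]

noncomputable def lobattoNodes (d b : ℕ) : Finset ℝ :=
  {k ∈ range (d + 1) | k ≡ b [MOD 2]}.image fun k : ℕ => cos (k * π / d)

lemma mem_lobattoNodes {d b : ℕ} {x : ℝ} :
    x ∈ lobattoNodes d b ↔ ∃ k ≤ d, k ≡ b [MOD 2] ∧ cos (k * π / d) = x := by
  simp [lobattoNodes, and_assoc]

lemma card_lobattoNodes {d b : ℕ} (hd : 0 < d) :
    #(lobattoNodes d b) = Nat.count (· ≡ b [MOD 2]) (d + 1) := by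
  rw [lobattoNodes, card_image_of_injOn, Nat.count_eq_card_filter_range]
  intro k hk l hl
  simp only [coe_filter, mem_range, Set.mem_ofPred_eq] at hk hl
  exact injOn_cos_nat_mul_pi_div hd (Set.mem_Iic.2 (by omega)) (Set.mem_Iic.2 (by omega))

lemma card_lobattoNodes_zero {d : ℕ} (hd : 0 < d) : #(lobattoNodes d 0) = d / 2 + 1 := by
  rw [card_lobattoNodes hd, Nat.count_modEq_card _ two_pos]
  split_ifs <;> omega

lemma card_lobattoNodes_one {d : ℕ} (hd : 0 < d) : #(lobattoNodes d 1) = (d + 1) / 2 := by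
  rw [card_lobattoNodes hd, Nat.count_modEq_card _ two_pos]
  split_ifs <;> omega

lemma disjoint_lobattoNodes {d b c : ℕ} (hd : 0 < d) (hbc : ¬b ≡ c [MOD 2]) :
    Disjoint (lobattoNodes d b) (lobattoNodes d c) := by
  simp only [disjoint_left, mem_lobattoNodes]
  rintro _ ⟨k, hk, hkb, rfl⟩ ⟨l, hl, hlc, hlk⟩
  have := injOn_cos_nat_mul_pi_div hd hl hk hlk
  exact hbc (hkb.symm.trans (this ▸ hlc))

lemma cos_mem_lobattoNodes {d b k : ℕ} (hd : 0 < d) (hk : k ≤ d + 1) (hkb : k ≡ b [MOD 2]) :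
    cos (k * π / d) ∈ lobattoNodes d b := by
  simp only [lobattoNodes, mem_image, mem_filter, mem_range]
  obtain hk | rfl := Nat.lt_or_eq_of_le hk
  · exact ⟨k, ⟨hk, hkb⟩, rfl⟩
  · refine ⟨d - 1, ⟨by omega, ?_⟩, ?_⟩
    · unfold Nat.ModEq at *; omega
    · rw [Nat.cast_pred hd, Nat.cast_add_one, cos_add_one_mul_pi_div (by positivity)]

lemma natCast_eq_two_mul_sub {k j a : ℕ} (h : k + a = 2 * j) : (k : ℝ) = 2 * j - a := by
  rw [eq_sub_iff_add_eq]
  exact_mod_cast h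

lemma paduaPoints_eq {n : ℕ} (hn : 0 < n) :
    paduaPoints n = ↑(lobattoNodes n 0 ×ˢ lobattoNodes (n + 1) 1 ∪
      lobattoNodes n 1 ×ˢ lobattoNodes (n + 1) 0) := by
  have hn' : 0 < n + 1 := n.succ_pos
  ext ⟨x, y⟩
  simp only [paduaPoints, Set.mem_union, Set.mem_ofPred_eq, Prod.mk.injEq, coe_union, coe_product,
    Set.mem_prod, mem_coe]
  constructor
  · rintro (⟨i, j, hi, hj, hj', rfl, rfl⟩ | ⟨i, j, hi, hi', hj, hj', rfl, rfl⟩)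
    · have hx := cos_mem_lobattoNodes (k := 2 * i) (b := 0) hn (by omega) (by simp [Nat.ModEq])
      have hy := cos_mem_lobattoNodes (k := 2 * j - 1) (b := 1) hn' (by omega)
        (by unfold Nat.ModEq; omega)
      rw [natCast_eq_two_mul_sub (a := 0) (j := i) (by omega)] at hx
      rw [natCast_eq_two_mul_sub (a := 1) (j := j) (by omega)] at hy
      push_cast at hx hy
      exact Or.inl ⟨by simpa using hx, hy⟩
    · have hx := cos_mem_lobattoNodes (k := 2 * i - 1) (b := 1) hn (by omega)
        (by unfold Nat.ModEq; omega)
      have hy := cos_mem_lobattoNodes (k := 2 * j - 2) (b := 0) hn' (by omega)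
        (by unfold Nat.ModEq; omega)
      rw [natCast_eq_two_mul_sub (a := 1) (j := i) (by omega)] at hx
      rw [natCast_eq_two_mul_sub (a := 2) (j := j) (by omega)] at hy
      push_cast at hx hy
      exact Or.inr ⟨hx, hy⟩
  · simp only [mem_lobattoNodes]
    rintro (⟨⟨k, hk, hkb, rfl⟩, ⟨l, hl, hlb, rfl⟩⟩ | ⟨⟨k, hk, hkb, rfl⟩, ⟨l, hl, hlb, rfl⟩⟩)
    all_goals unfold Nat.ModEq at hkb hlb
    · refine Or.inl ⟨k / 2, (l + 1) / 2, by omega, by omega, by omega, ?_, ?_⟩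
      · rw [natCast_eq_two_mul_sub (a := 0) (j := k / 2) (by omega)]
        simp
      · rw [natCast_eq_two_mul_sub (a := 1) (j := (l + 1) / 2) (by omega)]
        push_cast
        rfl
    · refine Or.inr ⟨(k + 1) / 2, l / 2 + 1, by omega, by omega, by omega, by omega, ?_, ?_⟩
      · rw [natCast_eq_two_mul_sub (a := 1) (j := (k + 1) / 2) (by omega)]
        simp
      · rw [natCast_eq_two_mul_sub (a := 2) (j := l / 2 + 1) (by omega)]
        push_cast
        rfl

lemma half_add_one_mul_add_half_mul (n : ℕ) :
    (n / 2 + 1) * ((n + 1 + 1) / 2) + (n + 1) / 2 * ((n + 1) / 2 + 1) = (n + 1) * (n + 2) / 2 := by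
  symm
  apply Nat.div_eq_of_eq_mul_left two_pos
  obtain ⟨a, rfl | rfl⟩ := Nat.even_or_odd' n
  · rw [show (2 * a + 1 + 1) / 2 = a + 1 by omega, show (2 * a + 1) / 2 = a by omega,
      show 2 * a / 2 = a by omega]
    ring
  · rw [show (2 * a + 1 + 1 + 1) / 2 = a + 1 by omega, show (2 * a + 1 + 1) / 2 = a + 1 by omega,
      show (2 * a + 1) / 2 = a by omega]
    ring

/-- The set of Padua points has cardinality `(n+1)(n+2)/2 = dim Π_n^2`. -/
theorem paduaPoints_ncard (n : ℕ) (hn : 0 < n) :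
    (paduaPoints n).ncard = (n + 1) * (n + 2) / 2 := by
  have hdisj : Disjoint (lobattoNodes n 0 ×ˢ lobattoNodes (n + 1) 1)
      (lobattoNodes n 1 ×ˢ lobattoNodes (n + 1) 0) :=
    disjoint_product.2 (Or.inl (disjoint_lobattoNodes hn (by decide)))
  rw [paduaPoints_eq hn, Set.ncard_coe_finset, card_union_of_disjoint hdisj, card_product,
    card_product, card_lobattoNodes_zero hn, card_lobattoNodes_one n.succ_pos,
    card_lobattoNodes_one hn, card_lobattoNodes_zero n.succ_pos, half_add_one_mul_add_half_mul]
end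

section
/- If a Gaussian cubature rule of degree 2n−1 exists for weight W on [−1,1]² (i.e., a positive cubature rule exact on Π_{2n−1}^2 with exactly n(n+1)/2 nodes), then every orthogonal polynomial of degree n with respect to W vanishes at every node. -/
/-!
Positivity of the functional on nonzero squares of degree `≤ 2n - 2` makes evaluation at the
nodes injective on `Π_{n-1}`. The number of nodes is `dim Π_{n-1} = n(n+1)/2`, so it is also
surjective, and every node `z` has a Lagrange polynomial `ℓ` of degree `n - 1`: `ℓ(z) = 1` and
`ℓ` vanishes at the other nodes. Exactness in degree `2n - 1` and orthogonality then give
`0 = ∫∫ P ℓ W = λ_z P(z)`, and `λ_z ≠ 0`.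
-/

open MeasureTheory MvPolynomial

/-- Evaluation of a bivariate polynomial at a point of the plane. -/
noncomputable def evalAt (p : ℝ × ℝ) (f : MvPolynomial (Fin 2) ℝ) : ℝ :=
  MvPolynomial.eval ![p.1, p.2] f

open Finset Module

theorem Finsupp.natCard_setOf_sum_le {σ : Type*} [Fintype σ] (d : ℕ) :
    Nat.card {s : σ →₀ ℕ | (s.sum fun _ e ↦ e) ≤ d} =
      (d + Fintype.card σ).choose (Fintype.card σ) := by
  classical
  have hS : {s : σ →₀ ℕ | (s.sum fun _ e ↦ e) ≤ d} =
      ↑((range (d + 1)).biUnion fun k ↦ (univ : Finset σ).finsuppAntidiag k) := by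
    ext s
    simp [Finsupp.sum_fintype]
  have hdisj : (range (d + 1) : Set ℕ).PairwiseDisjoint
      fun k ↦ (univ : Finset σ).finsuppAntidiag k := by
    intro i _ j _ hij
    exact disjoint_left.mpr fun s hi hj ↦
      hij ((mem_finsuppAntidiag.mp hi).1.symm.trans (mem_finsuppAntidiag.mp hj).1)
  rw [hS, Nat.card_coe_set_eq, Set.ncard_coe_finset, card_biUnion hdisj]
  simp_rw [card_finsuppAntidiag_nat_eq_multichoose, card_univ]
  exact Nat.sum_range_multichoose d _

namespace MvPolynomial

variable {σ : Type*}

theorem finrank_restrictTotalDegree {R : Type*} [CommRing R] [StrongRankCondition R]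
    [Fintype σ] (d : ℕ) :
    finrank R (restrictTotalDegree σ R d) = (d + Fintype.card σ).choose (Fintype.card σ) := by
  rw [restrictTotalDegree, finrank_eq_nat_card_basis (basisRestrictSupport R _),
    Finsupp.natCard_setOf_sum_le]

theorem finrank_restrictTotalDegree_fin_two {R : Type*} [CommRing R] [StrongRankCondition R]
    (d : ℕ) : finrank R (restrictTotalDegree (Fin 2) R d) = (d + 1) * (d + 2) / 2 := by
  rw [finrank_restrictTotalDegree, Fintype.card_fin, Nat.choose_two_right,
    show d + 2 - 1 = d + 1 by omega, mul_comm]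

section Cubature

variable {K ι : Type*} [Field K]

def IsCubatureOfDegree [Fintype ι] (I : MvPolynomial σ K → K) (lam : ι → K) (x : ι → σ → K)
    (m : ℕ) : Prop :=
  ∀ f : MvPolynomial σ K, f.totalDegree ≤ m → I f = ∑ k, lam k * eval (x k) f

noncomputable def evalNodes (x : ι → σ → K) (d : ℕ) : restrictTotalDegree σ K d →ₗ[K] ι → K :=
  LinearMap.pi fun k ↦ (aeval (x k)).toLinearMap ∘ₗ (restrictTotalDegree σ K d).subtype

@[simp]
theorem evalNodes_apply (x : ι → σ → K) (d : ℕ) (f : restrictTotalDegree σ K d) (k : ι) :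
    evalNodes x d f k = eval (x k) f := by
  simp [evalNodes]

namespace IsCubatureOfDegree

variable [Fintype ι] {I : MvPolynomial σ K → K} {lam : ι → K} {x : ι → σ → K} {m d : ℕ}

theorem mono (h : IsCubatureOfDegree I lam x m) {m' : ℕ} (hm : m' ≤ m) :
    IsCubatureOfDegree I lam x m' :=
  fun f hf ↦ h f (hf.trans hm)

theorem evalNodes_injective (h : IsCubatureOfDegree I lam x (2 * d))
    (hI : ∀ f : MvPolynomial σ K, f.totalDegree ≤ d → f ≠ 0 → I (f * f) ≠ 0) :
    Function.Injective (evalNodes x d) := by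
  refine (injective_iff_map_eq_zero _).mpr fun f hf ↦ Subtype.ext <| by_contra fun hf0 ↦ ?_
  have hdeg : (f : MvPolynomial σ K).totalDegree ≤ d := (mem_restrictTotalDegree _ _ _).mp f.2
  apply hI f hdeg hf0
  rw [h _ ((totalDegree_mul _ _).trans (by omega))]
  simp [← evalNodes_apply, hf]

theorem evalNodes_surjective [Finite σ] (h : IsCubatureOfDegree I lam x (2 * d))
    (hI : ∀ f : MvPolynomial σ K, f.totalDegree ≤ d → f ≠ 0 → I (f * f) ≠ 0)
    (hcard : Fintype.card ι = finrank K (restrictTotalDegree σ K d)) :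
    Function.Surjective (evalNodes x d) :=
  (LinearMap.injective_iff_surjective_of_finrank_eq_finrank (by simp [hcard])).mp
    (h.evalNodes_injective hI)

theorem eval_eq_zero_of_orthogonal [Finite σ] (h : IsCubatureOfDegree I lam x (2 * d + 1))
    (hI : ∀ f : MvPolynomial σ K, f.totalDegree ≤ d → f ≠ 0 → I (f * f) ≠ 0)
    (hcard : Fintype.card ι = finrank K (restrictTotalDegree σ K d)) (hlam : ∀ k, lam k ≠ 0)
    {P : MvPolynomial σ K} (hP : P.totalDegree ≤ d + 1)
    (horth : ∀ Q : MvPolynomial σ K, Q.totalDegree ≤ d → I (P * Q) = 0) (k : ι) :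
    eval (x k) P = 0 := by
  classical
  obtain ⟨L, hL⟩ := (h.mono (by omega)).evalNodes_surjective hI hcard (Pi.single k 1)
  have hLdeg : (L : MvPolynomial σ K).totalDegree ≤ d := (mem_restrictTotalDegree _ _ _).mp L.2
  have hPL := horth L hLdeg
  rw [h _ ((totalDegree_mul _ _).trans (by omega))] at hPL
  have hLk : ∀ j, eval (x j) (L : MvPolynomial σ K) = (Pi.single k 1 : ι → K) j := fun j ↦ by
    rw [← evalNodes_apply, hL]
  simpa [hLk, Pi.single_apply, hlam k] using hPL

end IsCubatureOfDegree

end Cubature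

end MvPolynomial

theorem gaussian_cubature_nodes_are_zeros_general (n : ℕ) (hn : 1 ≤ n) (W : ℝ × ℝ → ℝ)
    (hWpos : ∀ f : MvPolynomial (Fin 2) ℝ, f ≠ 0 → f.totalDegree ≤ 2 * n - 2 →
      (∀ p ∈ (Set.Icc (-1:ℝ) 1 ×ˢ Set.Icc (-1:ℝ) 1), 0 ≤ evalAt p f) →
      0 < ∫ p in (Set.Icc (-1:ℝ) 1 ×ˢ Set.Icc (-1:ℝ) 1), evalAt p f * W p)
    (N : ℕ) (hN : N = n * (n + 1) / 2)
    (node : Fin N → ℝ × ℝ) (lam : Fin N → ℝ) (hlam : ∀ k, 0 < lam k)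
    (hexact : ∀ f : MvPolynomial (Fin 2) ℝ, f.totalDegree ≤ 2 * n - 1 →
      ∫ p in (Set.Icc (-1:ℝ) 1 ×ˢ Set.Icc (-1:ℝ) 1), evalAt p f * W p =
        ∑ k, lam k * evalAt (node k) f)
    (P : MvPolynomial (Fin 2) ℝ) (hPdeg : P.totalDegree = n)
    (hPorth : ∀ Q : MvPolynomial (Fin 2) ℝ, Q.totalDegree < n →
      ∫ p in (Set.Icc (-1:ℝ) 1 ×ˢ Set.Icc (-1:ℝ) 1), evalAt p (P * Q) * W p = 0) :
    ∀ k, evalAt (node k) P = 0 := by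
  obtain ⟨d, rfl⟩ : ∃ d, n = d + 1 := ⟨n - 1, by omega⟩
  have hcube : IsCubatureOfDegree
      (fun f ↦ ∫ p in (Set.Icc (-1:ℝ) 1 ×ˢ Set.Icc (-1:ℝ) 1), evalAt p f * W p) lam
      (fun k ↦ ![(node k).1, (node k).2]) (2 * d + 1) :=
    fun f hf ↦ hexact f (by omega)
  refine hcube.eval_eq_zero_of_orthogonal (fun f hf hf0 ↦ ?_) ?_ (fun k ↦ (hlam k).ne')
    hPdeg.le (fun Q hQ ↦ hPorth Q (by omega))
  · refine (hWpos (f * f) (mul_ne_zero hf0 hf0) ((totalDegree_mul f f).trans (by omega))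
      fun p _ ↦ ?_).ne'
    simpa only [evalAt, map_mul] using mul_self_nonneg (evalAt p f)
  · rw [Fintype.card_fin, hN, finrank_restrictTotalDegree_fin_two]

/-- If a Gaussian cubature rule of degree `2n−1` (a positive rule exact on `Π_{2n−1}^2`
with exactly `n(n+1)/2` nodes) exists for the weight `W` on `[−1,1]²`, then every
orthogonal polynomial of degree `n` with respect to `W` vanishes at every node. -/
theorem gaussian_cubature_nodes_are_zeros (n : ℕ) (hn : 1 ≤ n) (W : ℝ × ℝ → ℝ)
    (hW0 : ∀ p ∈ (Set.Icc (-1:ℝ) 1 ×ˢ Set.Icc (-1:ℝ) 1), 0 ≤ W p)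
    (hWpos : ∀ f : MvPolynomial (Fin 2) ℝ, f ≠ 0 → f.totalDegree ≤ 2 * n - 2 →
      (∀ p ∈ (Set.Icc (-1:ℝ) 1 ×ˢ Set.Icc (-1:ℝ) 1), 0 ≤ evalAt p f) →
      0 < ∫ p in (Set.Icc (-1:ℝ) 1 ×ˢ Set.Icc (-1:ℝ) 1), evalAt p f * W p)
    (N : ℕ) (hN : N = n * (n + 1) / 2)
    (node : Fin N → ℝ × ℝ) (lam : Fin N → ℝ) (hlam : ∀ k, 0 < lam k)
    (hexact : ∀ f : MvPolynomial (Fin 2) ℝ, f.totalDegree ≤ 2 * n - 1 →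
      ∫ p in (Set.Icc (-1:ℝ) 1 ×ˢ Set.Icc (-1:ℝ) 1), evalAt p f * W p =
        ∑ k, lam k * evalAt (node k) f)
    (P : MvPolynomial (Fin 2) ℝ) (hPdeg : P.totalDegree = n)
    (hPorth : ∀ Q : MvPolynomial (Fin 2) ℝ, Q.totalDegree < n →
      ∫ p in (Set.Icc (-1:ℝ) 1 ×ˢ Set.Icc (-1:ℝ) 1), evalAt p (P * Q) * W p = 0) :
    ∀ k, evalAt (node k) P = 0 :=
  gaussian_cubature_nodes_are_zeros_general n hn W hWpos N hN node lam hlam hexact P hPdeg hPorth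
end
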